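/- arXiv:2406.10445 — 3 statements merged into one kernel-verified Lean document; each statement's English description precedes it below -/
import Mathlib

section
/- Suppose the link-loss function F is affine with negative slope, F(z) = a·z + b with a < 0. Then for any reward model R̂ : X → [-1,1] and preference dataset of N pairs, ∑_i L_1(τ_1^i, τ_2^i, R̂) = C_1 · ∑_i L_2(τ_1^i, τ_2^i, R̂) + C_2, where C_1 = −1/a > 0 and C_2 = 2NT + N·b/a are constants independent of R̂. Consequently, the two objectives have the same minimizers over any set of reward models. -/
/-- If the link-loss `F` is affine with negative slope, `F z = a * z + b` with
`a < 0`, then the binary-label regression objective `∑ i, L₁` and the direct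
preference objective `∑ i, L₂ = ∑ i, F (∑_{τ₁ⁱ} R̂ - ∑_{τ₂ⁱ} R̂)` are related by
`∑ L₁ = C₁ * ∑ L₂ + C₂` with `C₁ = -1/a > 0` and `C₂ = 2NT + N*b/a`, constants
independent of `R̂`; consequently the two objectives have the same minimizers
over bounded reward models. -/
theorem affine_link_loss_equivalence
    {X : Type*} (N T : ℕ) (a b : ℝ) (ha : a < 0) (F : ℝ → ℝ)
    (hFdef : ∀ z, F z = a * z + b)
    (τ₁ τ₂ : Fin N → Fin T → X)
    (L₁ L₂ : (X → ℝ) → ℝ)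
    (hL₁ : ∀ R : X → ℝ, L₁ R = ∑ i : Fin N,
        ((∑ t : Fin T, |1 - R (τ₁ i t)|) + ∑ t : Fin T, |R (τ₂ i t) + 1|))
    (hL₂ : ∀ R : X → ℝ, L₂ R = ∑ i : Fin N,
        F ((∑ t : Fin T, R (τ₁ i t)) - ∑ t : Fin T, R (τ₂ i t))) :
    (∀ R : X → ℝ, (∀ x, |R x| ≤ 1) →
        L₁ R = (-1 / a) * L₂ R + (2 * N * T + N * b / a)) ∧
    (0 < -1 / a) ∧
    (∀ R R' : X → ℝ, (∀ x, |R x| ≤ 1) → (∀ x, |R' x| ≤ 1) →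
        (L₁ R ≤ L₁ R' ↔ L₂ R ≤ L₂ R')) := by
  have ha' : a ≠ 0 := ne_of_lt ha
  have hpos : 0 < -1 / a := by
    rw [div_pos_iff]; right; constructor <;> linarith
  have key : ∀ R : X → ℝ, (∀ x, |R x| ≤ 1) →
      L₁ R = (-1 / a) * L₂ R + (2 * N * T + N * b / a) := by
    intro R hR
    have habs1 : ∀ x, |1 - R x| = 1 - R x := by
      intro x
      have := abs_le.mp (hR x)
      rw [abs_of_nonneg]; linarith [this.2]
    have habs2 : ∀ x, |R x + 1| = R x + 1 := by
      intro x
      have := abs_le.mp (hR x)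
      rw [abs_of_nonneg]; linarith [this.1]
    have h1 : L₁ R = 2 * N * T - ∑ i : Fin N,
        ((∑ t : Fin T, R (τ₁ i t)) - ∑ t : Fin T, R (τ₂ i t)) := by
      rw [hL₁]
      have : ∀ i : Fin N,
          ((∑ t : Fin T, |1 - R (τ₁ i t)|) + ∑ t : Fin T, |R (τ₂ i t) + 1|)
          = 2 * T - ((∑ t : Fin T, R (τ₁ i t)) - ∑ t : Fin T, R (τ₂ i t)) := by
        intro i
        simp only [habs1, habs2, Finset.sum_sub_distrib, Finset.sum_add_distrib,
          Finset.sum_const, Finset.card_univ, Fintype.card_fin, nsmul_eq_mul]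
        ring
      rw [Finset.sum_congr rfl (fun i _ => this i), Finset.sum_sub_distrib]
      simp [Finset.sum_const, Finset.card_univ]
      ring
    have h2 : L₂ R = a * (∑ i : Fin N,
        ((∑ t : Fin T, R (τ₁ i t)) - ∑ t : Fin T, R (τ₂ i t))) + N * b := by
      rw [hL₂]
      simp only [hFdef, Finset.sum_add_distrib,
        Finset.sum_const, Finset.card_univ, Fintype.card_fin, nsmul_eq_mul]
      rw [← Finset.mul_sum]
    rw [h1]
    rw [h2]
    field_simp
    ring
  refine ⟨key, hpos, ?_⟩
  intro R R' hR hR'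
  rw [key R hR, key R' hR']
  constructor
  · intro h
    have := add_le_add_right (le_of_add_le_add_right h) 0
    nlinarith
  · intro h
    nlinarith
end

section
/- Let F be strictly decreasing and suppose every state-action in the dataset is unique. Then any reward model R̂* : X → [-1,1] minimizing the preference loss ∑_i F(∑_{x∈τ_1^i} R̂(x) − ∑_{x∈τ_2^i} R̂(x)) over all functions X → [-1,1] must satisfy R̂*(x) = 1 for every x appearing in a chosen trajectory and R̂*(x) = −1 for every x appearing in a rejected trajectory; moreover the same function minimizes the binary-label regression loss ∑_i L_1(τ_1^i, τ_2^i, R̂). Hence the two optimization problems have the same set of minimizers when restricted to the dataset. -/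
/-- With strictly decreasing link-loss `F` and all state-actions in the dataset
distinct, any bounded reward model `R` minimizing the direct preference loss
assigns `+1` to every state-action of a chosen trajectory and `-1` to every
state-action of a rejected trajectory, and the same `R` also minimizes the
binary-label regression loss: the two problems have the same minimizers. -/
theorem preference_and_regression_same_minimizers
    {X : Type*} (N T : ℕ) (F : ℝ → ℝ) (hF : StrictAnti F)
    (τ : Fin N → Fin 2 → Fin T → X)
    (hinj : Function.Injective (fun p : Fin N × Fin 2 × Fin T => τ p.1 p.2.1 p.2.2))
    (Lpref L₁ : (X → ℝ) → ℝ)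
    (hLpref : ∀ R : X → ℝ, Lpref R = ∑ i : Fin N,
        F ((∑ t : Fin T, R (τ i 0 t)) - ∑ t : Fin T, R (τ i 1 t)))
    (hL₁ : ∀ R : X → ℝ, L₁ R = ∑ i : Fin N,
        ((∑ t : Fin T, |1 - R (τ i 0 t)|) + ∑ t : Fin T, |R (τ i 1 t) + 1|))
    (R : X → ℝ) (hR : ∀ x, |R x| ≤ 1)
    (hmin : ∀ R' : X → ℝ, (∀ x, |R' x| ≤ 1) → Lpref R ≤ Lpref R') :
    (∀ i t, R (τ i 0 t) = 1 ∧ R (τ i 1 t) = -1) ∧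
    (∀ R' : X → ℝ, (∀ x, |R' x| ≤ 1) → L₁ R ≤ L₁ R') := by
  classical
  -- the candidate optimal reward model
  set Rs : X → ℝ := fun x => if ∃ i t, τ i 1 t = x then -1 else 1 with hRsdef
  have hRsb : ∀ x, |Rs x| ≤ 1 := by
    intro x
    simp only [hRsdef]
    split <;> simp
  have key2 : ∀ i t, Rs (τ i 1 t) = -1 := by
    intro i t
    simp only [hRsdef]
    rw [if_pos ⟨i, t, rfl⟩]
  have key1 : ∀ i t, Rs (τ i 0 t) = 1 := by
    intro i t
    simp only [hRsdef]
    rw [if_neg]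
    rintro ⟨i', t', h⟩
    have := hinj (a₁ := (i', 1, t')) (a₂ := (i, 0, t)) h
    simp only [Prod.mk.injEq] at this
    exact absurd this.2.1 (by decide)
  have hRle : ∀ x, R x ≤ 1 := fun x => (abs_le.mp (hR x)).2
  have hRge : ∀ x, -1 ≤ R x := fun x => (abs_le.mp (hR x)).1
  -- value of Lpref at Rs
  have hLRs : Lpref Rs = ∑ _i : Fin N, F (2 * T) := by
    rw [hLpref]
    apply Finset.sum_congr rfl
    intro i _
    congr 1
    simp [key1, key2]
    ring
  -- termwise lower bound
  have hterm : ∀ i : Fin N,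
      F (2 * T) ≤ F ((∑ t : Fin T, R (τ i 0 t)) - ∑ t : Fin T, R (τ i 1 t)) := by
    intro i
    apply hF.antitone
    have h1 : (∑ t : Fin T, R (τ i 0 t)) ≤ (T : ℝ) := by
      calc (∑ t : Fin T, R (τ i 0 t)) ≤ ∑ _t : Fin T, (1 : ℝ) :=
        Finset.sum_le_sum (fun t _ => hRle _)
      _ = T := by simp
    have h2 : (-(T : ℝ)) ≤ ∑ t : Fin T, R (τ i 1 t) := by
      calc (-(T:ℝ)) = ∑ _t : Fin T, (-1 : ℝ) := by simp
      _ ≤ ∑ t : Fin T, R (τ i 1 t) := Finset.sum_le_sum (fun t _ => hRge _)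
    linarith
  have hsumle : Lpref R ≤ Lpref Rs := hmin Rs hRsb
  rw [hLpref R, hLRs] at hsumle
  have heq : ∀ i ∈ Finset.univ, F (2 * T) =
      F ((∑ t : Fin T, R (τ i 0 t)) - ∑ t : Fin T, R (τ i 1 t)) := by
    rw [← Finset.sum_eq_sum_iff_of_le (fun i _ => hterm i)]
    exact le_antisymm (Finset.sum_le_sum (fun i _ => hterm i)) hsumle
  have hS : ∀ i : Fin N,
      (∑ t : Fin T, R (τ i 0 t)) - (∑ t : Fin T, R (τ i 1 t)) = 2 * T := by
    intro i
    exact (hF.injective (heq i (Finset.mem_univ i))).symm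
  -- extract termwise equalities
  have hvals : ∀ i t, R (τ i 0 t) = 1 ∧ R (τ i 1 t) = -1 := by
    intro i t
    have h1 : (∑ t : Fin T, R (τ i 0 t)) ≤ (T : ℝ) := by
      calc (∑ t : Fin T, R (τ i 0 t)) ≤ ∑ _t : Fin T, (1 : ℝ) :=
        Finset.sum_le_sum (fun t _ => hRle _)
      _ = T := by simp
    have h2 : (-(T : ℝ)) ≤ ∑ t : Fin T, R (τ i 1 t) := by
      calc (-(T:ℝ)) = ∑ _t : Fin T, (-1 : ℝ) := by simp
      _ ≤ ∑ t : Fin T, R (τ i 1 t) := Finset.sum_le_sum (fun t _ => hRge _)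
    have hA : (∑ t : Fin T, R (τ i 0 t)) = (T : ℝ) := by
      have := hS i; linarith
    have hB : (∑ t : Fin T, R (τ i 1 t)) = -(T : ℝ) := by
      have := hS i; linarith
    constructor
    · have hz : (∑ t : Fin T, (1 - R (τ i 0 t))) = 0 := by
        rw [Finset.sum_sub_distrib, hA]; simp
      have := (Finset.sum_eq_zero_iff_of_nonneg
        (fun t _ => by have := hRle (τ i 0 t); linarith)).mp hz t (Finset.mem_univ t)
      linarith
    · have hz : (∑ t : Fin T, (R (τ i 1 t) + 1)) = 0 := by
        rw [Finset.sum_add_distrib, hB]; simp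
      have := (Finset.sum_eq_zero_iff_of_nonneg
        (fun t _ => by have := hRge (τ i 1 t); linarith)).mp hz t (Finset.mem_univ t)
      linarith
  refine ⟨hvals, ?_⟩
  intro R' hR'
  have hL₁R : L₁ R = 0 := by
    rw [hL₁]
    apply Finset.sum_eq_zero
    intro i _
    have hA : (∑ t : Fin T, |1 - R (τ i 0 t)|) = 0 :=
      Finset.sum_eq_zero (fun t _ => by rw [(hvals i t).1]; simp)
    have hB : (∑ t : Fin T, |R (τ i 1 t) + 1|) = 0 :=
      Finset.sum_eq_zero (fun t _ => by rw [(hvals i t).2]; simp)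
    rw [hA, hB]; ring
  rw [hL₁R, hL₁ R']
  apply Finset.sum_nonneg
  intro i _
  have h1 : (0:ℝ) ≤ ∑ t : Fin T, |1 - R' (τ i 0 t)| :=
    Finset.sum_nonneg (fun t _ => abs_nonneg _)
  have h2 : (0:ℝ) ≤ ∑ t : Fin T, |R' (τ i 1 t) + 1| :=
    Finset.sum_nonneg (fun t _ => abs_nonneg _)
  linarith
end

section
/- Under the boundedness assumption Q(s,a) − γ·max_{a'}Q(s',a') ∈ [-1,1] for all dataset transitions, if the link-loss F is affine with negative slope a < 0, then ∑_i L_3(τ_1^i, τ_2^i, Q) = C_1 · ∑_i L_4(τ_1^i, τ_2^i, Q) + C_2 for constants C_1 = −1/a > 0 and C_2 = 2NT + N·b/a independent of Q, where L_4(τ_1, τ_2, Q) = F(∑_{(s,a,s')∈τ_1} r̂(s,a,s') − ∑_{(s,a,s')∈τ_2} r̂(s,a,s')) and r̂(s,a,s') = Q(s,a) − γ·max_{a'}Q(s',a'). Hence the Q-learning objectives on binary reward labels and directly on preferences have the same minimizers. -/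
/-- With bounded implied rewards and an affine link-loss `F z = a*z + b`
(`a < 0`), the total binary-label Bellman objective `∑ i, L₃` and the direct
preference Q-learning objective `∑ i, L₄` satisfy
`∑ L₃ = C₁ * ∑ L₄ + C₂` with `C₁ = -1/a > 0`, `C₂ = 2NT + N*b/a`, hence they
have the same minimizers over bounded Q-functions. -/
theorem bellman_affine_link_loss_equivalence
    {S A : Type*} [Fintype A] [Nonempty A]
    (N T : ℕ) (γ : ℝ) (hγ0 : 0 ≤ γ) (hγ1 : γ < 1)
    (a b : ℝ) (ha : a < 0) (F : ℝ → ℝ) (hFdef : ∀ z, F z = a * z + b)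
    (τ₁ τ₂ : Fin N → Fin T → S × A × S)
    (rhat : (S × A → ℝ) → S × A × S → ℝ)
    (hrhat : ∀ (Q : S × A → ℝ) (p : S × A × S),
        rhat Q p = Q (p.1, p.2.1) - γ * (Finset.univ.sup' Finset.univ_nonempty
          (fun a' : A => Q (p.2.2, a'))))
    (L₃ L₄ : (S × A → ℝ) → ℝ)
    (hL₃ : ∀ Q : S × A → ℝ, L₃ Q = ∑ i : Fin N,
        ((∑ t : Fin T,
            |Q ((τ₁ i t).1, (τ₁ i t).2.1) - (1 + γ * (Finset.univ.sup' Finset.univ_nonempty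
              (fun a' : A => Q ((τ₁ i t).2.2, a'))))|) +
         (∑ t : Fin T,
            |Q ((τ₂ i t).1, (τ₂ i t).2.1) - (-1 + γ * (Finset.univ.sup' Finset.univ_nonempty
              (fun a' : A => Q ((τ₂ i t).2.2, a'))))|)))
    (hL₄ : ∀ Q : S × A → ℝ, L₄ Q = ∑ i : Fin N,
        F ((∑ t : Fin T, rhat Q (τ₁ i t)) - ∑ t : Fin T, rhat Q (τ₂ i t))) :
    (∀ Q : S × A → ℝ,
        (∀ i t, |rhat Q (τ₁ i t)| ≤ 1 ∧ |rhat Q (τ₂ i t)| ≤ 1) →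
        L₃ Q = (-1 / a) * L₄ Q + (2 * N * T + N * b / a)) ∧
    (0 < -1 / a) ∧
    (∀ Q Q' : S × A → ℝ,
        (∀ i t, |rhat Q (τ₁ i t)| ≤ 1 ∧ |rhat Q (τ₂ i t)| ≤ 1) →
        (∀ i t, |rhat Q' (τ₁ i t)| ≤ 1 ∧ |rhat Q' (τ₂ i t)| ≤ 1) →
        (L₃ Q ≤ L₃ Q' ↔ L₄ Q ≤ L₄ Q')) := by
  have ha' : a ≠ 0 := ne_of_lt ha
  have hC : (0:ℝ) < -1 / a := by
    rw [div_pos_iff]; right; constructor <;> linarith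
  have key : ∀ Q : S × A → ℝ,
      (∀ i t, |rhat Q (τ₁ i t)| ≤ 1 ∧ |rhat Q (τ₂ i t)| ≤ 1) →
      L₃ Q = (-1 / a) * L₄ Q + (2 * N * T + N * b / a) := by
    intro Q hQ
    rw [hL₃ Q, hL₄ Q]
    have h1 : ∀ i t, |Q ((τ₁ i t).1, (τ₁ i t).2.1) -
        (1 + γ * (Finset.univ.sup' Finset.univ_nonempty
          (fun a' : A => Q ((τ₁ i t).2.2, a'))))| = 1 - rhat Q (τ₁ i t) := by
      intro i t
      have hb := (hQ i t).1
      rw [abs_le] at hb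
      rw [hrhat] at hb ⊢
      rw [abs_of_nonpos (by linarith [hb.2])]
      ring
    have h2 : ∀ i t, |Q ((τ₂ i t).1, (τ₂ i t).2.1) -
        (-1 + γ * (Finset.univ.sup' Finset.univ_nonempty
          (fun a' : A => Q ((τ₂ i t).2.2, a'))))| = 1 + rhat Q (τ₂ i t) := by
      intro i t
      have hb := (hQ i t).2
      rw [abs_le] at hb
      rw [hrhat] at hb ⊢
      rw [abs_of_nonneg (by linarith [hb.1])]
      ring
    simp only [h1, h2, hFdef]
    have expand : ∀ i : Fin N,
        ((∑ t : Fin T, (1 - rhat Q (τ₁ i t))) + ∑ t : Fin T, (1 + rhat Q (τ₂ i t)))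
          = 2 * T - ((∑ t : Fin T, rhat Q (τ₁ i t)) - ∑ t : Fin T, rhat Q (τ₂ i t)) := by
      intro i
      rw [Finset.sum_sub_distrib, Finset.sum_add_distrib]
      simp [Finset.sum_const]
      ring
    rw [Finset.sum_congr rfl (fun i _ => expand i)]
    rw [Finset.sum_sub_distrib, Finset.sum_add_distrib]
    simp only [Finset.sum_const, Finset.card_univ, Fintype.card_fin, nsmul_eq_mul]
    rw [← Finset.mul_sum]
    field_simp
    ring
  refine ⟨key, hC, ?_⟩
  intro Q Q' hQ hQ'
  rw [key Q hQ, key Q' hQ']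
  constructor <;> intro h
  · nlinarith
  · nlinarith
end
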